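/- Let x* ∈ ℝⁿ with support J = supp(x*). Suppose there exist real numbers a_j, j ∈ J, such that the vector v = Σ_{j∈J} a_j W⁻¹ P e_j satisfies (C.1): v_i = sgn(x*_i) for all i ∈ J, and (C.2): v_i ∈ (−1, 1) for all i ∉ J. Let α > 0 be such that sgn(x*_j − α a_j) = sgn(x*_j) for all j ∈ J. Then y*_α = Σ_{j∈J} (x*_j − α a_j) e_j is the UNIQUE minimizer of T_α(x) = ½ ‖P x − P x*‖₂² + α Σ_{i=1}^n w_i |x_i| if and only if A is injective on the support of x*, i.e., the only q ∈ ℝⁿ with supp(q) ⊆ supp(x*) and A q = 0 is q = 0. -/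

import Mathlib

open scoped RealInnerProductSpace Classical

/-- The `i`-th standard basis vector of `ℝⁿ`. -/
noncomputable def stdBasis (n : ℕ) (i : Fin n) : EuclideanSpace ℝ (Fin n) :=
  EuclideanSpace.single i 1

/-- `P`: the orthogonal projection of `ℝⁿ` onto the orthogonal complement of `ker A`
(this equals `A†A` for the Moore–Penrose pseudoinverse `A†`). -/
noncomputable def proj {m n : ℕ} (A : EuclideanSpace ℝ (Fin n) →ₗ[ℝ] EuclideanSpace ℝ (Fin m))
    (x : EuclideanSpace ℝ (Fin n)) : EuclideanSpace ℝ (Fin n) :=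
  (Submodule.orthogonalProjectionOnto (LinearMap.ker A)ᗮ x : EuclideanSpace ℝ (Fin n))

/-- The weights `w i = ‖P e_i‖₂`. -/
noncomputable def wgt {m n : ℕ} (A : EuclideanSpace ℝ (Fin n) →ₗ[ℝ] EuclideanSpace ℝ (Fin m))
    (i : Fin n) : ℝ :=
  ‖proj A (stdBasis n i)‖

/-- The weighted ℓ¹ norm `‖W x‖₁ = ∑ i, w i * |x i|`. -/
noncomputable def wl1 {m n : ℕ} (A : EuclideanSpace ℝ (Fin n) →ₗ[ℝ] EuclideanSpace ℝ (Fin m))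
    (x : EuclideanSpace ℝ (Fin n)) : ℝ :=
  ∑ i, wgt A i * |x i|

/-! With `g = P (y* - x*)`, the hypotheses on `v` and `y*` say exactly that `g i = -α w_i v_i`.
Since `P` is an orthogonal projection, `‖P y - P x*‖²` expands around `y*` with cross term
`2 ⟪g, y - y*⟫`, and this gives
`T_α y = T_α y* + ½ ‖P (y - y*)‖² + α ∑ i, w_i (|y_i| - v_i y_i)`.
Every summand of the last sum is nonnegative because `|v_i| ≤ 1` and `v_i y*_i = |y*_i|`.
Hence `y*` is a minimizer, and `y` is one iff `A (y - y*) = 0` and `v_i y_i = |y_i|` for all `i`.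
Off the support `|v_i| < 1` forces `y_i = 0`, so minimizers differ from `y*` by kernel vectors
supported on `supp x*`. Conversely, for such a kernel vector `q`, `y* + ε q` is again a minimizer
once `ε ≠ 0` is small enough to keep the signs of `y*` on the support. -/

theorem Submodule.norm_sq_starProjection_sub_eq {E : Type*} [NormedAddCommGroup E]
    [InnerProductSpace ℝ E] (K : Submodule ℝ E) [K.HasOrthogonalProjection] (x y z : E) :
    ‖K.starProjection y - K.starProjection x‖ ^ 2 = ‖K.starProjection z - K.starProjection x‖ ^ 2
      + 2 * ⟪K.starProjection (z - x), y - z⟫ + ‖K.starProjection (y - z)‖ ^ 2 := by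
  have hinner : ⟪K.starProjection (z - x), K.starProjection (y - z)⟫
      = ⟪K.starProjection (z - x), y - z⟫ := by
    rw [K.inner_starProjection_left_eq_right,
      K.starProjection_eq_self_iff.2 (K.starProjection_apply_mem _),
      ← K.inner_starProjection_left_eq_right]
  rw [← hinner, ← map_sub K.starProjection z x, ← norm_add_sq_real, ← map_add,
    sub_add_sub_cancel', map_sub]

theorem mul_le_abs_of_abs_le_one {c : ℝ} (hc : |c| ≤ 1) (t : ℝ) : c * t ≤ |t| :=
  (le_abs_self _).trans (by rw [abs_mul]; exact mul_le_of_le_one_left (abs_nonneg t) hc)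

theorem mul_lt_abs_of_abs_lt_one {c t : ℝ} (hc : |c| < 1) (ht : t ≠ 0) : c * t < |t| :=
  (le_abs_self _).trans_lt (by rw [abs_mul]; exact mul_lt_of_lt_one_left (abs_pos.2 ht) hc)

theorem Real.sign_mul_self (r : ℝ) : Real.sign r * r = |r| := by
  rcases lt_trichotomy r 0 with hr | rfl | hr
  · rw [Real.sign_of_neg hr, abs_of_neg hr, neg_one_mul]
  · simp
  · rw [Real.sign_of_pos hr, abs_of_pos hr, one_mul]

theorem Real.abs_sign_of_ne_zero {r : ℝ} (hr : r ≠ 0) : |Real.sign r| = 1 := by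
  rcases Real.sign_apply_eq_of_ne_zero r hr with h | h <;> simp [h]

theorem Real.abs_sign_le_one (r : ℝ) : |Real.sign r| ≤ 1 := by
  rcases eq_or_ne r 0 with rfl | hr
  · simp
  · exact (Real.abs_sign_of_ne_zero hr).le

theorem exists_ne_zero_forall_pos_add_mul {ι : Type*} [Finite ι] {p : ι → Prop} {b : ι → ℝ}
    (c : ι → ℝ) (hb : ∀ i, p i → 0 < b i) : ∃ ε ≠ 0, ∀ i, p i → 0 < b i + ε * c i := by
  have hnear : ∀ᶠ ε in nhds (0 : ℝ), ∀ i, p i → 0 < b i + ε * c i := by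
    refine Filter.eventually_all.2 fun i => ?_
    by_cases hi : p i
    · have hcont : Continuous fun ε : ℝ => b i + ε * c i := by fun_prop
      exact (hcont.tendsto' 0 (b i) (by simp)).eventually (lt_mem_nhds (hb i hi)) |>.mono
        fun _ h _ => h
    · exact Filter.Eventually.of_forall fun _ h => absurd h hi
  obtain ⟨ε, hε, hε0⟩ := ((hnear.filter_mono nhdsWithin_le_nhds).and
    (self_mem_nhdsWithin (s := {0}ᶜ))).exists
  exact ⟨ε, hε0, hε⟩

section Lasso

variable {m n : ℕ} (A : EuclideanSpace ℝ (Fin n) →ₗ[ℝ] EuclideanSpace ℝ (Fin m))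

theorem proj_eq_starProjection (x : EuclideanSpace ℝ (Fin n)) :
    proj A x = (LinearMap.ker A)ᗮ.starProjection x :=
  rfl

theorem proj_eq_zero_iff {x : EuclideanSpace ℝ (Fin n)} : proj A x = 0 ↔ A x = 0 := by
  rw [proj_eq_starProjection, Submodule.starProjection_apply_eq_zero_iff,
    Submodule.orthogonal_orthogonal, LinearMap.mem_ker]

theorem wgt_pos (hA : ∀ i, stdBasis n i ∉ LinearMap.ker A) (i : Fin n) : 0 < wgt A i :=
  norm_pos_iff.2 fun h => hA i ((proj_eq_zero_iff A).1 h)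

theorem wgt_nonneg (i : Fin n) : 0 ≤ wgt A i :=
  norm_nonneg _

theorem sum_smul_stdBasis_apply (s : Finset (Fin n)) (c : Fin n → ℝ) (i : Fin n) :
    (∑ j ∈ s, c j • stdBasis n j) i = if i ∈ s then c i else 0 := by
  simp [stdBasis, Pi.single_apply, Finset.sum_ite_eq]

theorem proj_sum_smul_stdBasis_apply (s : Finset (Fin n)) (c : Fin n → ℝ) (i : Fin n) :
    proj A (∑ j ∈ s, c j • stdBasis n j) i = ∑ j ∈ s, c j * proj A (stdBasis n j) i := by
  simp [proj_eq_starProjection, map_sum, map_smul]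

/-- The paper's `T_α`. -/
noncomputable def l1Objective (xstar : EuclideanSpace ℝ (Fin n)) (α : ℝ)
    (x : EuclideanSpace ℝ (Fin n)) : ℝ :=
  1 / 2 * ‖proj A x - proj A xstar‖ ^ 2 + α * wl1 A x

/-- The Bregman distance of `wl1 A` from `ystar` to `y` for the subgradient `W v`, provided
`v i * ystar i = |ystar i|` and `|v i| ≤ 1`. -/
noncomputable def bregmanGap (v : Fin n → ℝ) (y : EuclideanSpace ℝ (Fin n)) : ℝ :=
  ∑ i, wgt A i * (|y i| - v i * y i)

theorem proj_sub_apply_eq_neg_mul (hA : ∀ i, stdBasis n i ∉ LinearMap.ker A)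
    {xstar ystar : EuclideanSpace ℝ (Fin n)} {a v : Fin n → ℝ} {α : ℝ}
    (hv : ∀ i, v i = ∑ j ∈ Finset.univ.filter (fun j => xstar j ≠ 0),
      a j * ((wgt A i)⁻¹ * proj A (stdBasis n j) i))
    (hy : ystar = ∑ j ∈ Finset.univ.filter (fun j => xstar j ≠ 0),
      (xstar j - α * a j) • stdBasis n j) (i : Fin n) :
    proj A (ystar - xstar) i = -(α * (wgt A i * v i)) := by
  have hdiff : ystar - xstar
      = ∑ j ∈ Finset.univ.filter (fun j => xstar j ≠ 0), (-(α * a j)) • stdBasis n j := by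
    ext k
    by_cases hk : xstar k = 0 <;> simp [hy, sum_smul_stdBasis_apply, hk]
  rw [hdiff, proj_sum_smul_stdBasis_apply, hv, Finset.mul_sum, Finset.mul_sum,
    ← Finset.sum_neg_distrib]
  refine Finset.sum_congr rfl fun j _ => ?_
  field_simp [(wgt_pos A hA i).ne']

end Lasso

section Certificate

variable {m n : ℕ} {A : EuclideanSpace ℝ (Fin n) →ₗ[ℝ] EuclideanSpace ℝ (Fin m)}
  {xstar ystar : EuclideanSpace ℝ (Fin n)} {v : Fin n → ℝ} {α : ℝ}

theorem l1Objective_eq_add_bregmanGap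
    (hgrad : ∀ i, proj A (ystar - xstar) i = -(α * (wgt A i * v i)))
    (hvy : ∀ i, v i * ystar i = |ystar i|) (y : EuclideanSpace ℝ (Fin n)) :
    l1Objective A xstar α y = l1Objective A xstar α ystar
      + (1 / 2 * ‖proj A (y - ystar)‖ ^ 2 + α * bregmanGap A v y) := by
  have hnorm := ((LinearMap.ker A)ᗮ).norm_sq_starProjection_sub_eq xstar y ystar
  simp only [← proj_eq_starProjection] at hnorm
  have hinner : ⟪proj A (ystar - xstar), y - ystar⟫
      = -α * (∑ i, wgt A i * v i * y i - ∑ i, wgt A i * v i * ystar i) := by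
    simp only [PiLp.inner_apply, hgrad, PiLp.sub_apply, RCLike.inner_apply, conj_trivial,
      Finset.mul_sum, ← Finset.sum_sub_distrib]
    exact Finset.sum_congr rfl fun i _ => by ring
  have hwl1 : ∀ z : EuclideanSpace ℝ (Fin n),
      wl1 A z = bregmanGap A v z + ∑ i, wgt A i * v i * z i := by
    intro z
    simp only [wl1, bregmanGap, ← Finset.sum_add_distrib]
    exact Finset.sum_congr rfl fun i _ => by ring
  have hgap : bregmanGap A v ystar = 0 :=
    Finset.sum_eq_zero fun i _ => by rw [hvy, sub_self, mul_zero]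
  simp only [l1Objective, hnorm, hinner, hwl1 y, hwl1 ystar, hgap]
  ring

theorem bregmanGap_nonneg (hv : ∀ i, |v i| ≤ 1) (y : EuclideanSpace ℝ (Fin n)) :
    0 ≤ bregmanGap A v y :=
  Finset.sum_nonneg fun i _ =>
    mul_nonneg (wgt_nonneg A i) (sub_nonneg.2 (mul_le_abs_of_abs_le_one (hv i) _))

theorem bregmanGap_eq_zero_iff (hA : ∀ i, stdBasis n i ∉ LinearMap.ker A)
    (hv : ∀ i, |v i| ≤ 1) {y : EuclideanSpace ℝ (Fin n)} :
    bregmanGap A v y = 0 ↔ ∀ i, v i * y i = |y i| := by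
  rw [bregmanGap, Finset.sum_eq_zero_iff_of_nonneg fun i _ =>
    mul_nonneg (wgt_nonneg A i) (sub_nonneg.2 (mul_le_abs_of_abs_le_one (hv i) _))]
  simp only [Finset.mem_univ, true_implies]
  refine forall_congr' fun i => ?_
  rw [mul_eq_zero, or_iff_right (wgt_pos A hA i).ne', sub_eq_zero, eq_comm]

theorem forall_l1Objective_le_iff (hA : ∀ i, stdBasis n i ∉ LinearMap.ker A) (hα : 0 < α)
    (hgrad : ∀ i, proj A (ystar - xstar) i = -(α * (wgt A i * v i)))
    (hvy : ∀ i, v i * ystar i = |ystar i|) (hv : ∀ i, |v i| ≤ 1)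
    {y : EuclideanSpace ℝ (Fin n)} :
    (∀ x, l1Objective A xstar α y ≤ l1Objective A xstar α x) ↔
      A (y - ystar) = 0 ∧ ∀ i, v i * y i = |y i| := by
  have hexcess := l1Objective_eq_add_bregmanGap hgrad hvy
  rw [← proj_eq_zero_iff, ← bregmanGap_eq_zero_iff hA hv]
  constructor
  · intro hmin
    have hle := hmin ystar
    rw [hexcess y] at hle
    have hsq := sq_nonneg ‖proj A (y - ystar)‖
    have hgap := mul_nonneg hα.le (bregmanGap_nonneg (A := A) hv y)
    refine ⟨norm_eq_zero.1 (pow_eq_zero_iff two_ne_zero |>.1 (by linarith)), ?_⟩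
    exact (mul_eq_zero.1 (by linarith : α * bregmanGap A v y = 0)).resolve_left hα.ne'
  · rintro ⟨hproj, hgap⟩ x
    rw [hexcess y, hexcess x, hproj, hgap, norm_zero]
    have := mul_nonneg hα.le (bregmanGap_nonneg (A := A) hv x)
    nlinarith [sq_nonneg ‖proj A (x - ystar)‖]

theorem mul_eq_abs_of_eq_sign (hsign : ∀ i, ystar i ≠ 0 → v i = Real.sign (ystar i))
    (i : Fin n) : v i * ystar i = |ystar i| := by
  rcases eq_or_ne (ystar i) 0 with hi | hi
  · simp [hi]
  · rw [hsign i hi, Real.sign_mul_self]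

theorem abs_le_one_of_eq_sign (hsign : ∀ i, ystar i ≠ 0 → v i = Real.sign (ystar i))
    (hoff : ∀ i, ystar i = 0 → |v i| < 1) (i : Fin n) : |v i| ≤ 1 := by
  rcases eq_or_ne (ystar i) 0 with hi | hi
  · exact (hoff i hi).le
  · rw [hsign i hi]
    exact Real.abs_sign_le_one _

theorem eq_of_forall_l1Objective_le (hA : ∀ i, stdBasis n i ∉ LinearMap.ker A) (hα : 0 < α)
    (hgrad : ∀ i, proj A (ystar - xstar) i = -(α * (wgt A i * v i)))
    (hsign : ∀ i, ystar i ≠ 0 → v i = Real.sign (ystar i))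
    (hoff : ∀ i, ystar i = 0 → |v i| < 1)
    (hinj : ∀ q : EuclideanSpace ℝ (Fin n), (∀ i, q i ≠ 0 → ystar i ≠ 0) → A q = 0 → q = 0)
    {y : EuclideanSpace ℝ (Fin n)} (hy : ∀ x, l1Objective A xstar α y ≤ l1Objective A xstar α x) :
    y = ystar := by
  obtain ⟨hker, hvy⟩ := (forall_l1Objective_le_iff hA hα hgrad (mul_eq_abs_of_eq_sign hsign)
    (abs_le_one_of_eq_sign hsign hoff)).1 hy
  refine sub_eq_zero.1 (hinj _ (fun i hi hi0 => ?_) hker)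
  have hyi : y i ≠ 0 := by simpa [hi0] using hi
  exact (mul_lt_abs_of_abs_lt_one (hoff i hi0) hyi).ne (hvy i)

theorem eq_zero_of_l1Objective_minimizer_unique (hA : ∀ i, stdBasis n i ∉ LinearMap.ker A)
    (hα : 0 < α) (hgrad : ∀ i, proj A (ystar - xstar) i = -(α * (wgt A i * v i)))
    (hsign : ∀ i, ystar i ≠ 0 → v i = Real.sign (ystar i))
    (hoff : ∀ i, ystar i = 0 → |v i| < 1)
    (huniq : ∀ y, (∀ x, l1Objective A xstar α y ≤ l1Objective A xstar α x) → y = ystar)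
    {q : EuclideanSpace ℝ (Fin n)} (hq : ∀ i, q i ≠ 0 → ystar i ≠ 0) (hAq : A q = 0) : q = 0 := by
  obtain ⟨ε, hε0, hε⟩ := exists_ne_zero_forall_pos_add_mul (p := fun i => ystar i ≠ 0)
    (fun i => v i * q i) fun i hi => (mul_eq_abs_of_eq_sign hsign i).symm ▸ abs_pos.2 hi
  have hmin : ∀ x, l1Objective A xstar α (ystar + ε • q) ≤ l1Objective A xstar α x := by
    refine (forall_l1Objective_le_iff hA hα hgrad (mul_eq_abs_of_eq_sign hsign)
      (abs_le_one_of_eq_sign hsign hoff)).2 ⟨by simp [hAq], fun i => ?_⟩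
    by_cases hi : ystar i = 0
    · have hqi : q i = 0 := by_contra fun h => hq i h hi
      simp [hi, hqi]
    · have hpos : 0 < v i * (ystar + ε • q) i := by simpa [mul_add, mul_left_comm] using hε i hi
      rw [← abs_of_pos hpos, abs_mul, hsign i hi, Real.abs_sign_of_ne_zero hi, one_mul]
  simpa [hε0] using huniq _ hmin

end Certificate

theorem stmt8 {m n : ℕ}
    (A : EuclideanSpace ℝ (Fin n) →ₗ[ℝ] EuclideanSpace ℝ (Fin m))
    (hA : ∀ i, stdBasis n i ∉ LinearMap.ker A)
    (xstar : EuclideanSpace ℝ (Fin n)) (a : Fin n → ℝ) (v : Fin n → ℝ)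
    (hv : ∀ i, v i = ∑ j ∈ Finset.univ.filter (fun j => xstar j ≠ 0),
      a j * ((wgt A i)⁻¹ * proj A (stdBasis n j) i))
    (hC1 : ∀ i, xstar i ≠ 0 → v i = Real.sign (xstar i))
    (hC2 : ∀ i, xstar i = 0 → v i ∈ Set.Ioo (-1 : ℝ) 1)
    (α : ℝ) (hα : 0 < α)
    (hsgn : ∀ j, xstar j ≠ 0 → Real.sign (xstar j - α * a j) = Real.sign (xstar j))
    (ystar : EuclideanSpace ℝ (Fin n))
    (hy : ystar = ∑ j ∈ Finset.univ.filter (fun j => xstar j ≠ 0),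
      (xstar j - α * a j) • stdBasis n j)
 :
    ((∀ x : EuclideanSpace ℝ (Fin n),
        (1 / 2) * ‖proj A ystar - proj A xstar‖ ^ 2 + α * wl1 A ystar ≤ (1 / 2) * ‖proj A x - proj A xstar‖ ^ 2 + α * wl1 A x) ∧
      ∀ y : EuclideanSpace ℝ (Fin n),
        (∀ x : EuclideanSpace ℝ (Fin n),
          (1 / 2) * ‖proj A y - proj A xstar‖ ^ 2 + α * wl1 A y ≤ (1 / 2) * ‖proj A x - proj A xstar‖ ^ 2 + α * wl1 A x) → y = ystar) ↔
    (∀ q : EuclideanSpace ℝ (Fin n), (∀ i, q i ≠ 0 → xstar i ≠ 0) → A q = 0 → q = 0) := by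
  have hy_apply (i : Fin n) : ystar i = if xstar i ≠ 0 then xstar i - α * a i else 0 := by
    simp [hy, sum_smul_stdBasis_apply]
  have hsign_y (i : Fin n) (hi : xstar i ≠ 0) : Real.sign (ystar i) = Real.sign (xstar i) := by
    rw [hy_apply, if_pos hi, hsgn i hi]
  have hsupp (i : Fin n) : ystar i ≠ 0 ↔ xstar i ≠ 0 := by
    refine ⟨fun h hx => h (by simp [hy_apply, hx]), fun hx h => hx ?_⟩
    rw [← Real.sign_eq_zero_iff, ← hsign_y i hx, h, Real.sign_zero]
  have hsign (i : Fin n) (hi : ystar i ≠ 0) : v i = Real.sign (ystar i) := by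
    rw [hC1 i ((hsupp i).1 hi), hsign_y i ((hsupp i).1 hi)]
  have hoff (i : Fin n) (hi : ystar i = 0) : |v i| < 1 :=
    abs_lt.2 (hC2 i (not_not.1 (mt (hsupp i).2 (not_not.2 hi))))
  have hgrad : ∀ i, proj A (ystar - xstar) i = -(α * (wgt A i * v i)) :=
    proj_sub_apply_eq_neg_mul A hA hv hy
  simp only [← hsupp]
  exact ⟨fun h _ => eq_zero_of_l1Objective_minimizer_unique hA hα hgrad hsign hoff h.2,
    fun hinj => ⟨(forall_l1Objective_le_iff hA hα hgrad (mul_eq_abs_of_eq_sign hsign)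
      (abs_le_one_of_eq_sign hsign hoff)).2 ⟨by simp, mul_eq_abs_of_eq_sign hsign⟩,
      fun _ => eq_of_forall_l1Objective_le hA hα hgrad hsign hoff hinj⟩⟩
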